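/- Let d ≥ 1, let 𝕋^d = (ℝ/ℤ)^d be the d-dimensional torus with its Haar (Lebesgue) probability measure, let 1 ≤ p, q < ∞ with 1/p + 1/p' = 1, let 0 < r ≤ 1 and let τ > 0 satisfy rτ > d. Let α ∈ L^{p'}(𝕋^d) ∩ L^q(𝕋^d). Then the operator α(I − Δ)^{−τ/2}, defined by (α(I−Δ)^{−τ/2} f)(x) = α(x) Σ_{ξ ∈ ℤ^d} (1 + 4π²|ξ|²)^{−τ/2} 𝓕f(ξ) e^{2πi x·ξ} where 𝓕f(ξ) = ∫_{𝕋^d} f(y) e^{−2πi y·ξ} dy, is a well-defined bounded linear operator from L^p(𝕋^d) to L^q(𝕋^d) and is r-nuclear. -/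

import Mathlib

/-!
Write `σ(ξ)` for the Bessel symbol and `e_ξ` for the characters. The operator factors as
`f ↦ Σ_ξ σ(ξ) 𝓕f(ξ) e_ξ`, a series of rank-one operators `L^p(𝕋^d) → C(𝕋^d)`, followed by the
bounded multiplication `g ↦ α g : C(𝕋^d) → L^q(𝕋^d)`. Because `𝕋^d` has measure one,
`|𝓕f(ξ)| ≤ ‖f‖₁ ≤ ‖f‖_p`, and `‖e_ξ‖_∞ = 1`, so the `ξ`-th term has norm at most `σ(ξ)`.
Then `r`-nuclearity reduces to `Σ_ξ σ(ξ)^r < ∞`. This holds for `rτ > d`, which we see by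
comparing `(1 + |ξ|²)^{-rτ/2}` with `∏ᵢ (1 + ξᵢ²)^{-rτ/(2d)}`. Since `r ≤ 1` the series also
converges absolutely in `C(𝕋^d)`, so evaluating it at `x` gives the pointwise formula.
-/

open MeasureTheory Real
open scoped ENNReal

/-- For `0 < r ≤ 1`, a bounded operator `T : X → Y` between Banach spaces is `r`-nuclear if
there exist a sequence `(x'_n)` in the dual `X'` and a sequence `(y_n)` in `Y` with
`Σ_n ‖x'_n‖^r ‖y_n‖^r < ∞` and `T x = Σ_n ⟨x, x'_n⟩ y_n` for all `x ∈ X`. -/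
def IsRNuclear (r : ℝ) {X Y : Type*} [NormedAddCommGroup X] [NormedSpace ℂ X]
    [NormedAddCommGroup Y] [NormedSpace ℂ Y] (T : X →L[ℂ] Y) : Prop :=
  ∃ (x' : ℕ → (X →L[ℂ] ℂ)) (y : ℕ → Y),
    Summable (fun n => ‖x' n‖ ^ r * ‖y n‖ ^ r) ∧
    ∀ x : X, HasSum (fun n => (x' n x) • y n) (T x)

/-- The character `x ↦ e^{2πi x·ξ}` on the torus `𝕋^d = (ℝ/ℤ)^d`, for `ξ ∈ ℤ^d`. -/
noncomputable def torusChar {d : ℕ} (ξ : Fin d → ℤ) (x : Fin d → AddCircle (1 : ℝ)) : ℂ :=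
  ∏ i, fourier (ξ i) (x i)

/-- The Fourier coefficient `𝓕f(ξ) = ∫_{𝕋^d} f(y) e^{-2πi y·ξ} dy`. -/
noncomputable def torusFourierCoeff {d : ℕ} (f : (Fin d → AddCircle (1 : ℝ)) → ℂ)
    (ξ : Fin d → ℤ) : ℂ :=
  ∫ y, f y * torusChar (-ξ) y

/-- The Bessel potential symbol `σ(ξ) = (1 + 4π²|ξ|²)^{-τ/2}` on `ℤ^d`. -/
noncomputable def besselSymbol {d : ℕ} (τ : ℝ) (ξ : Fin d → ℤ) : ℂ :=
  ((1 + 4 * π ^ 2 * ∑ i, (ξ i : ℝ) ^ 2) ^ (-(τ / 2)) : ℝ)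

section Nuclear

variable {X Y Z : Type*} [NormedAddCommGroup X] [NormedSpace ℂ X]
  [NormedAddCommGroup Y] [NormedSpace ℂ Y] [NormedAddCommGroup Z] [NormedSpace ℂ Z]
  {r : ℝ} {ι : Type*}

theorem IsRNuclear.of_hasSum [Countable ι] (hr : r ≠ 0) {T : X →L[ℂ] Y}
    (x' : ι → X →L[ℂ] ℂ) (y : ι → Y) (hs : Summable fun i => ‖x' i‖ ^ r * ‖y i‖ ^ r)
    (hT : ∀ x, HasSum (fun i => x' i x • y i) (T x)) : IsRNuclear r T := by
  obtain ⟨e, he⟩ := exists_injective_nat ι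
  refine ⟨Function.extend e x' 0, Function.extend e y 0, ?_, fun x => ?_⟩
  · refine (he.summable_iff fun n hn => ?_).mp ?_
    · simp [Function.extend_apply' _ _ _ hn, Real.zero_rpow hr]
    · simpa only [Function.comp_def, he.extend_apply] using hs
  · refine (he.hasSum_iff fun n hn => ?_).mp ?_
    · simp [Function.extend_apply' _ _ _ hn]
    · simpa only [Function.comp_def, he.extend_apply] using hT x

theorem IsRNuclear.clm_comp (hr : 0 ≤ r) (M : Y →L[ℂ] Z) {T : X →L[ℂ] Y}
    (hT : IsRNuclear r T) : IsRNuclear r (M ∘L T) := by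
  obtain ⟨x', y, hs, hxy⟩ := hT
  refine ⟨x', fun n => M (y n), ?_, fun x => by simpa using (hxy x).mapL M⟩
  refine Summable.of_nonneg_of_le (fun n => by positivity) (fun n => ?_) (hs.mul_left (‖M‖ ^ r))
  calc ‖x' n‖ ^ r * ‖M (y n)‖ ^ r ≤ ‖x' n‖ ^ r * (‖M‖ * ‖y n‖) ^ r := by
        gcongr; exact M.le_opNorm _
    _ = ‖M‖ ^ r * (‖x' n‖ ^ r * ‖y n‖ ^ r) := by
        rw [Real.mul_rpow (norm_nonneg _) (norm_nonneg _)]; ring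

theorem Summable.of_rpow_of_le_one {f : ι → ℝ} (hf : 0 ≤ f) (hr0 : 0 < r) (hr1 : r ≤ 1)
    (h : Summable fun i => f i ^ r) : Summable f := by
  have hr : 0 < (ENNReal.ofReal r).toReal := by rwa [ENNReal.toReal_ofReal hr0.le]
  have hmem : Memℓp f (ENNReal.ofReal r) := by
    rw [memℓp_gen_iff hr]
    simpa [ENNReal.toReal_ofReal hr0.le, Real.norm_eq_abs, abs_of_nonneg (hf _)] using h
  have := (memℓp_gen_iff (by simp)).mp (hmem.of_exponent_ge (ENNReal.ofReal_le_one.mpr hr1))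
  simpa [Real.norm_eq_abs, abs_of_nonneg (hf _)] using this

theorem hasSum_tsum_smulRight_apply [CompleteSpace Y] {x' : ι → X →L[ℂ] ℂ} {y : ι → Y}
    (hs : Summable fun i => ‖x' i‖ * ‖y i‖) (x : X) :
    HasSum (fun i => x' i x • y i) ((∑' i, (x' i).smulRight (y i)) x) :=
  (Summable.of_norm_bounded hs fun _ => (ContinuousLinearMap.norm_smulRight_apply _ _).le).hasSum
    |>.mapL (ContinuousLinearMap.apply ℂ Y x)

theorem isRNuclear_tsum_smulRight [Countable ι] [CompleteSpace Y] (hr0 : 0 < r) (hr1 : r ≤ 1)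
    (x' : ι → X →L[ℂ] ℂ) (y : ι → Y) (hs : Summable fun i => ‖x' i‖ ^ r * ‖y i‖ ^ r) :
    IsRNuclear r (∑' i, (x' i).smulRight (y i)) := by
  refine .of_hasSum hr0.ne' x' y hs (hasSum_tsum_smulRight_apply ?_)
  refine .of_rpow_of_le_one (fun i => by positivity) hr0 hr1 ?_
  simpa only [Real.mul_rpow (norm_nonneg _) (norm_nonneg _)] using hs

end Nuclear

section LpOperators

variable {X : Type*} [MeasurableSpace X] {μ : Measure X} {p : ℝ≥0∞} [Fact (1 ≤ p)]

theorem MeasureTheory.Lp.integral_norm_le_norm [IsProbabilityMeasure μ] {E : Type*}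
    [NormedAddCommGroup E] (f : Lp E p μ) : ∫ x, ‖f x‖ ∂μ ≤ ‖f‖ := by
  rw [Lp.norm_def, ← ENNReal.toReal_ofReal (integral_nonneg fun _ => norm_nonneg _),
    ofReal_integral_norm_eq_lintegral_enorm ((Lp.memLp f).integrable Fact.out),
    ← eLpNorm_one_eq_lintegral_enorm]
  exact ENNReal.toReal_mono (Lp.eLpNorm_ne_top f)
    (eLpNorm_le_eLpNorm_of_exponent_le Fact.out (Lp.aestronglyMeasurable f))

variable [TopologicalSpace X] [CompactSpace X] [BorelSpace X]

theorem MeasureTheory.Lp.integrable_mul_continuousMap [IsFiniteMeasure μ] (f : Lp ℂ p μ)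
    (g : C(X, ℂ)) : Integrable (fun x => f x * g x) μ :=
  ((Lp.memLp f).integrable Fact.out).mul_bdd g.continuous.aestronglyMeasurable
    (.of_forall g.norm_coe_le_norm)

variable (μ p) in
noncomputable def integralMulCLM [IsProbabilityMeasure μ] (g : C(X, ℂ)) : Lp ℂ p μ →L[ℂ] ℂ :=
  LinearMap.mkContinuous
    { toFun := fun f => ∫ x, f x * g x ∂μ
      map_add' := fun f₁ f₂ => by
        rw [← integral_add (Lp.integrable_mul_continuousMap f₁ g)
          (Lp.integrable_mul_continuousMap f₂ g)]
        refine integral_congr_ae ?_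
        filter_upwards [Lp.coeFn_add f₁ f₂] with x hx
        rw [hx, Pi.add_apply, add_mul]
      map_smul' := fun c f => by
        rw [RingHom.id_apply, smul_eq_mul, ← integral_const_mul]
        refine integral_congr_ae ?_
        filter_upwards [Lp.coeFn_smul c f] with x hx
        rw [hx, Pi.smul_apply, smul_eq_mul, mul_assoc] }
    ‖g‖ fun f => by
      calc ‖∫ x, f x * g x ∂μ‖ ≤ ∫ x, ‖f x‖ * ‖g‖ ∂μ := by
            refine norm_integral_le_of_norm_le
              (((Lp.memLp f).integrable Fact.out).norm.mul_const _) (.of_forall fun x => ?_)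
            rw [norm_mul]; gcongr; exact g.norm_coe_le_norm x
        _ ≤ ‖g‖ * ‖f‖ := by
            rw [integral_mul_const, mul_comm]; gcongr; exact Lp.integral_norm_le_norm f

theorem norm_integralMulCLM_le [IsProbabilityMeasure μ] (g : C(X, ℂ)) :
    ‖integralMulCLM μ p g‖ ≤ ‖g‖ :=
  LinearMap.mkContinuous_norm_le _ (norm_nonneg g) _

variable [IsFiniteMeasure μ] {α : X → ℂ}

noncomputable def MeasureTheory.MemLp.mulCLM (hα : MemLp α p μ) : C(X, ℂ) →L[ℂ] Lp ℂ p μ :=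
  (ContinuousLinearMap.mul ℂ ℂ).holderL μ p ∞ p hα.toLp ∘L ContinuousMap.toLp ∞ μ ℂ

theorem MeasureTheory.MemLp.coeFn_mulCLM (hα : MemLp α p μ) (g : C(X, ℂ)) :
    hα.mulCLM g =ᵐ[μ] fun x => α x * g x := by
  filter_upwards [(ContinuousLinearMap.mul ℂ ℂ).coeFn_holder (r := p) hα.toLp
    (ContinuousMap.toLp ∞ μ ℂ g), hα.coeFn_toLp, ContinuousMap.coeFn_toLp (p := ∞) (𝕜 := ℂ) μ g]
    with x h₁ h₂ h₃
  rw [MemLp.mulCLM, ContinuousLinearMap.comp_apply, ContinuousLinearMap.holderL_apply_apply, h₁,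
    h₂, h₃, ContinuousLinearMap.mul_apply']

end LpOperators

instance : IsProbabilityMeasure (volume : Measure UnitAddCircle) :=
  ⟨by simp [AddCircle.measure_univ]⟩

theorem summable_one_add_sq_rpow_neg {t : ℝ} (ht : 1 / 2 < t) :
    Summable fun n : ℤ => (1 + (n : ℝ) ^ 2) ^ (-t) := by
  refine (Real.summable_abs_int_rpow (b := 2 * t) (by linarith)).of_norm_bounded_eventually ?_
  filter_upwards [Filter.eventually_cofinite_ne 0] with n hn
  have hn1 : (0 : ℝ) < |(n : ℝ)| := by positivity
  rw [Real.norm_of_nonneg (by positivity), neg_mul_eq_mul_neg, Real.rpow_mul hn1.le,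
    Real.rpow_two, sq_abs]
  exact Real.rpow_le_rpow_of_nonpos (by positivity) (by linarith) (by linarith)

theorem summable_prod_fin_pi {β : Type*} {f : β → ℝ} (hf0 : 0 ≤ f) (hf : Summable f) (d : ℕ) :
    Summable fun ξ : Fin d → β => ∏ i, f (ξ i) := by
  induction d with
  | zero => exact .of_finite
  | succ d ih =>
    have hprod := hf.mul_of_nonneg ih hf0 fun ξ => Finset.prod_nonneg fun i _ => hf0 _
    refine ((Fin.consEquiv fun _ => β).symm.summable_iff.mpr hprod).congr fun ξ => ?_
    simp [Fin.prod_univ_succ, Fin.consEquiv, Fin.tail]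

theorem summable_one_add_sum_sq_rpow_neg {d : ℕ} {s : ℝ} (hs : d < 2 * s) :
    Summable fun ξ : Fin d → ℤ => (1 + ∑ i, (ξ i : ℝ) ^ 2) ^ (-s) := by
  rcases Nat.eq_zero_or_pos d with rfl | hd
  · exact .of_finite
  have hd : (0 : ℝ) < d := by exact_mod_cast hd
  set t := s / d
  have ht : 1 / 2 < t := by rw [lt_div_iff₀ hd]; linarith
  refine .of_nonneg_of_le (fun ξ => by positivity) (fun ξ => ?_)
    (summable_prod_fin_pi (fun n => by positivity) (summable_one_add_sq_rpow_neg ht) d)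
  have hprod : ∏ i, (1 + (ξ i : ℝ) ^ 2) ≤ (1 + ∑ i, (ξ i : ℝ) ^ 2) ^ d := by
    calc ∏ i, (1 + (ξ i : ℝ) ^ 2) ≤ ∏ _i : Fin d, (1 + ∑ i, (ξ i : ℝ) ^ 2) := by
          gcongr with i
          exact Finset.single_le_sum (fun j _ => sq_nonneg (ξ j : ℝ)) (Finset.mem_univ i)
      _ = _ := by simp
  calc (1 + ∑ i, (ξ i : ℝ) ^ 2) ^ (-s) = ((1 + ∑ i, (ξ i : ℝ) ^ 2) ^ d) ^ (-t) := by
        rw [← Real.rpow_natCast, ← Real.rpow_mul (by positivity), mul_neg,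
          show (d : ℝ) * t = s from mul_div_cancel₀ s hd.ne']
    _ ≤ (∏ i, (1 + (ξ i : ℝ) ^ 2)) ^ (-t) :=
        Real.rpow_le_rpow_of_nonpos (by positivity) hprod (by linarith)
    _ = ∏ i, (1 + (ξ i : ℝ) ^ 2) ^ (-t) :=
        (Real.finsetProd_rpow _ _ (fun i _ => by positivity) _).symm

theorem summable_norm_besselSymbol_rpow {d : ℕ} {r τ : ℝ} (hrτ : d < r * τ) :
    Summable fun ξ : Fin d → ℤ => ‖besselSymbol τ ξ‖ ^ r := by
  refine .of_nonneg_of_le (fun ξ => by positivity) (fun ξ => ?_)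
    (summable_one_add_sum_sq_rpow_neg (s := r * τ / 2) (by linarith))
  have hS : 0 ≤ ∑ i, (ξ i : ℝ) ^ 2 := by positivity
  rw [besselSymbol, Complex.norm_real, Real.norm_of_nonneg (by positivity),
    ← Real.rpow_mul (by positivity), show -(τ / 2) * r = -(r * τ / 2) by ring]
  apply Real.rpow_le_rpow_of_nonpos (by positivity)
  · have hπ : 1 ≤ 4 * π ^ 2 := by nlinarith [Real.pi_gt_three]
    nlinarith
  · nlinarith [(d.cast_nonneg : (0 : ℝ) ≤ d)]

open UnitAddTorus

section BesselPotential

variable (d : ℕ) (p : ℝ≥0∞) [Fact (1 ≤ p)] (τ : ℝ)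

/-- The Bessel potential `(I - Δ)^{-τ/2}`, landing in `C(𝕋^d)`. The series converges only for
`d < τ`; otherwise this `tsum` is the junk value `0`. -/
noncomputable def besselPotentialCLM :
    Lp ℂ p (volume : Measure (UnitAddTorus (Fin d))) →L[ℂ] C(UnitAddTorus (Fin d), ℂ) :=
  ∑' ξ : Fin d → ℤ,
    (besselSymbol τ ξ • integralMulCLM volume p (mFourier (-ξ))).smulRight (mFourier ξ)

variable {d p τ}

theorem norm_besselSymbol_smul_integralMulCLM_le (ξ : Fin d → ℤ) :
    ‖besselSymbol τ ξ • integralMulCLM volume p (mFourier (-ξ))‖ ≤ ‖besselSymbol τ ξ‖ := by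
  grw [norm_smul, norm_integralMulCLM_le, mFourier_norm, mul_one]

theorem isRNuclear_besselPotentialCLM {r : ℝ} (hr0 : 0 < r) (hr1 : r ≤ 1) (hrτ : d < r * τ) :
    IsRNuclear r (besselPotentialCLM d p τ) := by
  refine isRNuclear_tsum_smulRight hr0 hr1 _ _ <|
    (summable_norm_besselSymbol_rpow hrτ).of_nonneg_of_le (fun ξ => by positivity) fun ξ => ?_
  rw [mFourier_norm, Real.one_rpow, mul_one]
  gcongr
  exact norm_besselSymbol_smul_integralMulCLM_le ξ

theorem besselSymbol_smul_integralMulCLM_apply (ξ : Fin d → ℤ) (f : Lp ℂ p volume) :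
    (besselSymbol τ ξ • integralMulCLM volume p (mFourier (-ξ))) f =
      besselSymbol τ ξ * torusFourierCoeff f ξ :=
  rfl

theorem hasSum_besselPotentialCLM_apply (hτ : d < τ) (f : Lp ℂ p volume) :
    HasSum (fun ξ => (besselSymbol τ ξ * torusFourierCoeff f ξ) • mFourier ξ)
      (besselPotentialCLM d p τ f) := by
  have hs : Summable fun ξ : Fin d → ℤ =>
      ‖besselSymbol τ ξ • integralMulCLM volume p (mFourier (-ξ))‖ * ‖mFourier ξ‖ := by
    refine (summable_norm_besselSymbol_rpow (r := 1) (by simpa using hτ)).of_nonneg_of_le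
      (fun ξ => by positivity) fun ξ => ?_
    rw [mFourier_norm, mul_one, Real.rpow_one]
    exact norm_besselSymbol_smul_integralMulCLM_le ξ
  have h := hasSum_tsum_smulRight_apply hs f
  simp only [besselSymbol_smul_integralMulCLM_apply] at h
  exact h

end BesselPotential

theorem bessel_potential_multiplication_isRNuclear_general
    (d : ℕ)
    (p q : ℝ≥0∞) [Fact (1 ≤ p)] [Fact (1 ≤ q)]
    (r : ℝ) (hr0 : 0 < r) (hr1 : r ≤ 1)
    (τ : ℝ) (hrτ : (d : ℝ) < r * τ)
    (α : (Fin d → AddCircle (1 : ℝ)) → ℂ)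
    (hα2 : MemLp α q (volume : Measure (Fin d → AddCircle (1 : ℝ)))) :
    ∃ T : Lp ℂ p (volume : Measure (Fin d → AddCircle (1 : ℝ))) →L[ℂ] Lp ℂ q volume,
      (∀ f : Lp ℂ p (volume : Measure (Fin d → AddCircle (1 : ℝ))),
        ∀ᵐ x ∂(volume : Measure (Fin d → AddCircle (1 : ℝ))),
          (T f : (Fin d → AddCircle (1 : ℝ)) → ℂ) x =
            α x * ∑' ξ : Fin d → ℤ,
              besselSymbol τ ξ * torusFourierCoeff (f : (Fin d → AddCircle (1 : ℝ)) → ℂ) ξ *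
                torusChar ξ x) ∧
      IsRNuclear r T := by
  refine ⟨hα2.mulCLM ∘L besselPotentialCLM d p τ, fun f => ?_,
    (isRNuclear_besselPotentialCLM hr0 hr1 hrτ).clm_comp hr0.le _⟩
  have hτ : (d : ℝ) < τ := by nlinarith [(d.cast_nonneg : (0 : ℝ) ≤ d)]
  filter_upwards [hα2.coeFn_mulCLM (besselPotentialCLM d p τ f)] with x hx
  rw [ContinuousLinearMap.comp_apply, hx]
  congr 1
  exact ((hasSum_besselPotentialCLM_apply hτ f).mapL (ContinuousMap.evalCLM ℂ x)).tsum_eq.symm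

/-- For `α ∈ L^{p'}(𝕋^d) ∩ L^q(𝕋^d)`, `0 < r ≤ 1` and `τ > 0` with `rτ > d`, the operator
`α (I - Δ)^{-τ/2} : f ↦ α · Σ_ξ (1 + 4π²|ξ|²)^{-τ/2} 𝓕f(ξ) e^{2πi x·ξ}` is a well-defined
bounded operator from `L^p(𝕋^d)` to `L^q(𝕋^d)` and is `r`-nuclear. -/
theorem bessel_potential_multiplication_isRNuclear
    (d : ℕ) (hd : 1 ≤ d)
    (p p' q : ℝ≥0∞) [Fact (1 ≤ p)] [Fact (1 ≤ q)] [Fact (1 ≤ p')]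
    (hp : p ≠ ∞) (hq : q ≠ ∞) (hpp' : 1 / p + 1 / p' = 1)
    (r : ℝ) (hr0 : 0 < r) (hr1 : r ≤ 1)
    (τ : ℝ) (hτ : 0 < τ) (hrτ : (d : ℝ) < r * τ)
    (α : (Fin d → AddCircle (1 : ℝ)) → ℂ)
    (hα1 : MemLp α p' (volume : Measure (Fin d → AddCircle (1 : ℝ))))
    (hα2 : MemLp α q (volume : Measure (Fin d → AddCircle (1 : ℝ)))) :
    ∃ T : Lp ℂ p (volume : Measure (Fin d → AddCircle (1 : ℝ))) →L[ℂ] Lp ℂ q volume,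
      (∀ f : Lp ℂ p (volume : Measure (Fin d → AddCircle (1 : ℝ))),
        ∀ᵐ x ∂(volume : Measure (Fin d → AddCircle (1 : ℝ))),
          (T f : (Fin d → AddCircle (1 : ℝ)) → ℂ) x =
            α x * ∑' ξ : Fin d → ℤ,
              besselSymbol τ ξ * torusFourierCoeff (f : (Fin d → AddCircle (1 : ℝ)) → ℂ) ξ *
                torusChar ξ x) ∧
      IsRNuclear r T :=
  bessel_potential_multiplication_isRNuclear_general d p q r hr0 hr1 τ hrτ α hα2
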